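/- Let v : ℝ → ℝ → ℝ satisfy v s t > 0 for all s ∈ ℝ and t > 0, let γ, k ∈ ℝ with k ≠ 0, and assume: (i) gradient-flow covariance: v (s+τ) t = exp(γ·τ) · v s (exp(k·τ)·t) for all s, τ ∈ ℝ and t > 0; (ii) log-shift invariance: there exists φ : ℝ → ℝ with v (s+τ) t = φ(τ) · v s t for all s, τ ∈ ℝ and t > 0; (iii) for some t₀ > 0 the map s ↦ v s t₀ is continuous. Then there exist a, b ∈ ℝ and c > 0 such that v s t = c · t^b · exp(a·s) for all s ∈ ℝ and t > 0. -/

import Mathlib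

/-!
Log-shift invariance at the time `t₀` makes the shift factor `φ τ = v τ t₀ / v 0 t₀` a continuous
positive solution of `φ (τ + σ) = φ τ * φ σ`, so `φ τ = exp (a τ)` and
`v s t = exp (a s) * v 0 t`. Gradient-flow covariance at `s = 0` then rescales time:
`exp (γ τ) * v 0 (exp (k τ)) = v τ 1 = exp (a τ) * v 0 1`, and since `k ≠ 0` every `t > 0` is of the
form `exp (k τ)`, which gives `v 0 t = t ^ ((a - γ) / k) * v 0 1`.
-/

open Real

theorem eq_mul_of_continuous_of_map_add {f : ℝ → ℝ} (hf : Continuous f)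
    (hadd : ∀ x y, f (x + y) = f x + f y) (x : ℝ) : f x = f 1 * x := by
  simpa [mul_comm] using map_real_smul (AddMonoidHom.mk' f hadd) hf x 1

theorem eq_exp_mul_of_continuous_of_map_add_eq_mul {φ : ℝ → ℝ} (hφ : Continuous φ)
    (hpos : ∀ x, 0 < φ x) (hmul : ∀ x y, φ (x + y) = φ x * φ y) (x : ℝ) :
    φ x = exp (log (φ 1) * x) := by
  have hlog_add : ∀ x y, log (φ (x + y)) = log (φ x) + log (φ y) := fun x y => by
    rw [hmul, log_mul (hpos x).ne' (hpos y).ne']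
  have hlog_cont : Continuous fun x => log (φ x) := hφ.log fun x => (hpos x).ne'
  rw [← eq_mul_of_continuous_of_map_add hlog_cont hlog_add x, exp_log (hpos x)]

section ShellVelocity

variable {v : ℝ → ℝ → ℝ}

theorem exists_eq_exp_mul_of_shift (hpos : ∀ s t : ℝ, 0 < t → 0 < v s t) {φ : ℝ → ℝ}
    (hshift : ∀ s τ t : ℝ, 0 < t → v (s + τ) t = φ τ * v s t) {t₀ : ℝ} (ht₀ : 0 < t₀)
    (hcont : Continuous fun s => v s t₀) :
    ∃ a : ℝ, ∀ s t : ℝ, 0 < t → v s t = exp (a * s) * v 0 t := by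
  have hshift₀ : ∀ τ t, 0 < t → v τ t = φ τ * v 0 t := fun τ t ht => by
    simpa using hshift 0 τ t ht
  have hv₀ : 0 < v 0 t₀ := hpos 0 t₀ ht₀
  have hφ_eq : φ = fun τ => v τ t₀ / v 0 t₀ := funext fun τ => by
    rw [hshift₀ τ t₀ ht₀, mul_div_cancel_right₀ _ hv₀.ne']
  have hφ_mul : ∀ τ σ, φ (τ + σ) = φ τ * φ σ := fun τ σ => by
    refine mul_right_cancel₀ hv₀.ne' ?_
    rw [← hshift₀ _ _ ht₀, add_comm, hshift _ _ _ ht₀, hshift₀ _ _ ht₀, mul_assoc]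
  have hφ_exp := eq_exp_mul_of_continuous_of_map_add_eq_mul (hφ_eq ▸ hcont.div_const _)
    (fun τ => hφ_eq ▸ div_pos (hpos τ t₀ ht₀) hv₀) hφ_mul
  exact ⟨log (φ 1), fun s t ht => by rw [hshift₀ s t ht, hφ_exp]⟩

theorem eq_rpow_mul_of_covariant {a γ k : ℝ} (hk : k ≠ 0)
    (hsep : ∀ s t : ℝ, 0 < t → v s t = exp (a * s) * v 0 t)
    (hcov : ∀ s τ t : ℝ, 0 < t → v (s + τ) t = exp (γ * τ) * v s (exp (k * τ) * t))
    {t : ℝ} (ht : 0 < t) : v 0 t = t ^ ((a - γ) / k) * v 0 1 := by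
  set τ := log t / k
  have hexp : exp (k * τ) = t := by rw [mul_div_cancel₀ _ hk, exp_log ht]
  have h := hcov 0 τ 1 one_pos
  rw [zero_add, mul_one, hexp, hsep τ 1 one_pos] at h
  have hrpow : t ^ ((a - γ) / k) = exp (a * τ) / exp (γ * τ) := by
    rw [← exp_sub, ← sub_mul, rpow_def_of_pos ht, mul_comm, div_mul_eq_mul_div,
      mul_div_assoc]
  rw [hrpow, div_mul_eq_mul_div, h, mul_div_cancel_left₀ _ (exp_pos _).ne']

end ShellVelocity

/-- **Rigidity core of Theorem 3.1 (power-law renormalizability).**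
A positive shell velocity `v` satisfying both gradient-flow covariance
(`v (s+τ) t = exp(γ τ) · v s (exp(k τ) t)`, with `k ≠ 0`) and log-shift invariance
(`v (s+τ) t = φ τ · v s t`), and continuous in `s` at some time `t₀ > 0`, must be a pure
power law: `v s t = c · t^b · exp (a s)`. -/
theorem power_law_rigidity
    (v : ℝ → ℝ → ℝ)
    (hpos : ∀ s t : ℝ, 0 < t → 0 < v s t)
    (γ k : ℝ) (hk : k ≠ 0)
    (hcov : ∀ s τ t : ℝ, 0 < t →
      v (s + τ) t = Real.exp (γ * τ) * v s (Real.exp (k * τ) * t))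
    (hshift : ∃ φ : ℝ → ℝ, ∀ s τ t : ℝ, 0 < t → v (s + τ) t = φ τ * v s t)
    (hcont : ∃ t₀ : ℝ, 0 < t₀ ∧ Continuous fun s : ℝ => v s t₀) :
    ∃ a b : ℝ, ∃ c : ℝ, 0 < c ∧
      ∀ s t : ℝ, 0 < t → v s t = c * t ^ b * Real.exp (a * s) := by
  obtain ⟨φ, hφ⟩ := hshift
  obtain ⟨t₀, ht₀, hcont⟩ := hcont
  obtain ⟨a, hsep⟩ := exists_eq_exp_mul_of_shift hpos hφ ht₀ hcont
  refine ⟨a, (a - γ) / k, v 0 1, hpos 0 1 one_pos, fun s t ht => ?_⟩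
  rw [hsep s t ht, eq_rpow_mul_of_covariant hk hsep hcov ht]
  ring
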